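/- arXiv:2310.17904 — 2 statements merged into one kernel-verified Lean document; each statement's English description precedes it below -/
import Mathlib

section
/- Let s ≥ 2 and let G = sK₃ ∨ K₁ be the join of s disjoint triangles with a single vertex, a graph of order n = 3s+1. Then ft(G) = s+1 = (n−1)/3 + 1, Z*(G) = 3s/2 = (n−1)/2, and Z(G) = 2s+1 = 2(n−1)/3 + 1. -/
open Finset

/-- A fort of a graph: a nonempty (finite) set of vertices `F` such that no vertex
outside `F` has exactly one neighbor in `F`. -/
def IsFort {V : Type*} (G : SimpleGraph V) (F : Finset V) : Prop :=
  F.Nonempty ∧ ∀ v ∉ F, ¬ ∃! u, u ∈ F ∧ G.Adj v u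

/-- The fort number: the maximum cardinality of a collection of pairwise disjoint forts. -/
noncomputable def fortNumber {V : Type*} (G : SimpleGraph V) : ℕ :=
  sSup {k | ∃ 𝒞 : Finset (Finset V), (∀ F ∈ 𝒞, IsFort G F) ∧
    (↑𝒞 : Set (Finset V)).Pairwise Disjoint ∧ 𝒞.card = k}

/-- The fractional zero forcing number. -/
noncomputable def fracZ {V : Type*} [Fintype V] (G : SimpleGraph V) : ℝ :=
  sInf {x : ℝ | ∃ ω : V → ℝ, (∀ v, 0 ≤ ω v) ∧
    (∀ F : Finset V, IsFort G F → 1 ≤ ∑ v ∈ F, ω v) ∧ x = ∑ v, ω v}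

/-- The set of vertices eventually filled by the zero forcing process started at `S`. -/
inductive ZFForced {V : Type*} (G : SimpleGraph V) (S : Set V) : V → Prop
  | init (v : V) : v ∈ S → ZFForced G S v
  | force (u w : V) : G.Adj u w → ZFForced G S u →
      (∀ x, G.Adj u x → x ≠ w → ZFForced G S x) → ZFForced G S w

/-- A zero forcing set: starting from `S`, every vertex is eventually filled. -/
def IsZeroForcingSet {V : Type*} (G : SimpleGraph V) (S : Set V) : Prop :=
  ∀ v, ZFForced G S v

/-- The zero forcing number: minimum cardinality of a zero forcing set. -/
noncomputable def zfNumber {V : Type*} (G : SimpleGraph V) : ℕ :=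
  sInf {k | ∃ S : Finset V, IsZeroForcingSet G ↑S ∧ S.card = k}


/-- The graph `sK₃ ∨ K₁`: `s` disjoint triangles joined to one extra vertex. -/
def sK3veeK1 (s : ℕ) : SimpleGraph (Fin s × Fin 3 ⊕ Unit) :=
  SimpleGraph.fromRel (fun a b => match a, b with
    | Sum.inl (i, _), Sum.inl (j, _) => i = j
    | _, _ => True)

/-!
A fort of `sK₃ ∨ K₁` either contains two vertices of one triangle (and any two vertices of a
triangle form a fort), or contains the apex and meets every triangle (and the apex together with
one vertex per triangle is a fort). Disjoint forts of the first kind use distinct triangles and at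
most one fort contains the apex, so `ft ≤ s + 1`, with equality for one pair in each triangle plus
the apex with the remaining vertices. Weight `1/2` on every triangle vertex is feasible because for
`s ≥ 2` every fort has two triangle vertices, and the three pair forts of a triangle force weight
`3/2` on it, so `Z* = 3s/2`. A zero forcing set meets every fort: it misses at most one vertex of
each triangle, and cannot miss both the apex and a vertex of every triangle, so `Z = 2s + 1`,
attained by leaving one vertex of every triangle unfilled.
-/

section Forts

variable {V : Type*} {G : SimpleGraph V} {F : Finset V}

theorem isFort_iff :
    IsFort G F ↔ F.Nonempty ∧ ∀ v ∉ F, ∀ u ∈ F, G.Adj v u → ∃ w ∈ F, w ≠ u ∧ G.Adj v w := by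
  refine and_congr_right fun _ => forall₂_congr fun v _ => ?_
  constructor
  · intro h u hu huv
    by_contra! hw
    exact h ⟨u, ⟨hu, huv⟩, fun w ⟨hw', hvw⟩ => by_contra fun hne => (hw w hw' hne) hvw⟩
  · rintro h ⟨u, ⟨hu, huv⟩, huniq⟩
    obtain ⟨w, hw, hne, hvw⟩ := h u hu huv
    exact hne (huniq w ⟨hw, hvw⟩)

theorem IsZeroForcingSet.exists_mem_of_isFort {S : Set V} (hS : IsZeroForcingSet G S)
    (hF : IsFort G F) : ∃ v ∈ F, v ∈ S := by
  by_contra! hFS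
  have forced_notMem : ∀ v, ZFForced G S v → v ∉ F := by
    intro v hv
    induction hv with
    | init v hvS => exact fun hvF => hFS v hvF hvS
    | force u w huw _ _ hu_notMem hrest_notMem =>
      intro hwF
      obtain ⟨x, hxF, hxw, hux⟩ := (isFort_iff.mp hF).2 u hu_notMem w hwF huw
      exact hrest_notMem x hux hxw hxF
  obtain ⟨v, hv⟩ := hF.1
  exact forced_notMem v (hS v) hv

end Forts

namespace sK3veeK1

open Sum

variable {s : ℕ} {i j : Fin s} {x y : Fin 3} {u : Unit}
  {F F' S : Finset (Fin s × Fin 3 ⊕ Unit)}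

@[simp]
theorem adj_inl_inl : (sK3veeK1 s).Adj (inl (i, x)) (inl (j, y)) ↔ i = j ∧ x ≠ y := by
  simp only [sK3veeK1, SimpleGraph.fromRel_adj, ne_eq, inl.injEq, Prod.mk.injEq]
  grind

@[simp]
theorem adj_inl_inr : (sK3veeK1 s).Adj (inl (i, x)) (inr u) := by
  simp [sK3veeK1]

@[simp]
theorem adj_inr_inl : (sK3veeK1 s).Adj (inr u) (inl (i, x)) :=
  adj_inl_inr.symm

def trace (F : Finset (Fin s × Fin 3 ⊕ Unit)) (i : Fin s) : Finset (Fin 3) :=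
  {x | inl (i, x) ∈ F}

@[simp]
theorem mem_trace : x ∈ trace F i ↔ inl (i, x) ∈ F := by
  simp [trace]

theorem sum_eq_sum_trace {M : Type*} [AddCommMonoid M] (F : Finset (Fin s × Fin 3 ⊕ Unit))
    (f : Fin s × Fin 3 ⊕ Unit → M) :
    ∑ v ∈ F, f v =
      ∑ i, ∑ x ∈ trace F i, f (inl (i, x)) + if inr () ∈ F then f (inr ()) else 0 := by
  rw [← Fintype.sum_ite_mem, Fintype.sum_sum_type, Fintype.sum_prod_type]
  simp [trace, sum_filter]

theorem card_eq_sum_card_trace (F : Finset (Fin s × Fin 3 ⊕ Unit)) :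
    #F = ∑ i, #(trace F i) + if inr () ∈ F then 1 else 0 := by
  rw [card_eq_sum_ones, sum_eq_sum_trace]
  simp

theorem not_disjoint_of_one_lt_card_trace (hF : 1 < #(trace F i)) (hF' : 1 < #(trace F' i)) :
    ¬ Disjoint F F' := by
  intro hdisj
  have htrace : Disjoint (trace F i) (trace F' i) :=
    disjoint_filter.mpr fun x _ hx hx' => disjoint_left.mp hdisj hx hx'
  have := card_union_of_disjoint htrace ▸ card_le_univ (trace F i ∪ trace F' i)
  rw [Fintype.card_fin] at this
  omega

theorem isFort_pair (i : Fin s) (hxy : x ≠ y) :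
    IsFort (sK3veeK1 s) {inl (i, x), inl (i, y)} := by
  refine isFort_iff.mpr ⟨insert_nonempty _ _, ?_⟩
  rintro (⟨j, z⟩ | ⟨⟩) hv u hu hadj
  · simp only [mem_insert, mem_singleton] at hv hu
    rcases hu with rfl | rfl
    · exact ⟨inl (i, y), by simp, by simpa using hxy.symm, by grind [adj_inl_inl]⟩
    · exact ⟨inl (i, x), by simp, by simpa using hxy, by grind [adj_inl_inl]⟩
  · simp only [mem_insert, mem_singleton] at hu
    rcases hu with rfl | rfl
    · exact ⟨inl (i, y), by simp, by simpa using hxy.symm, adj_inr_inl⟩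
    · exact ⟨inl (i, x), by simp, by simpa using hxy, adj_inr_inl⟩

theorem isFort_insert_apex (c : Fin s → Fin 3) :
    IsFort (sK3veeK1 s) (insert (inr ()) (univ.image fun i => inl (i, c i))) := by
  refine isFort_iff.mpr ⟨insert_nonempty _ _, ?_⟩
  rintro (⟨j, z⟩ | ⟨⟩) hv u - -
  · have hz : z ≠ c j := by
      rintro rfl
      simp at hv
    by_cases hu : u = inr ()
    · exact ⟨inl (j, c j), by simp, by simp [hu], by simpa using hz⟩
    · exact ⟨inr (), mem_insert_self _ _, Ne.symm hu, adj_inl_inr⟩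
  · simp at hv

theorem apex_mem_or_one_lt_card_trace_of_isFort (hF : IsFort (sK3veeK1 s) F) :
    inr () ∈ F ∨ ∃ i, 1 < #(trace F i) := by
  by_contra! h
  obtain ⟨(⟨i, x⟩ | ⟨⟩), hxF⟩ := hF.1
  · have trace_eq : ∀ y, inl (i, y) ∈ F → y = x := fun y hy =>
      card_le_one.mp (h.2 i) y (mem_trace.mpr hy) x (mem_trace.mpr hxF)
    obtain ⟨y, hyx⟩ : ∃ y : Fin 3, y ≠ x := exists_ne x
    obtain ⟨w, hwF, hwx, hyw⟩ := (isFort_iff.mp hF).2 (inl (i, y))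
      (fun hy => hyx (trace_eq y hy)) (inl (i, x)) hxF (by simpa using hyx)
    rcases w with ⟨j, z⟩ | ⟨⟩
    · obtain ⟨rfl, -⟩ := adj_inl_inl.mp hyw
      exact hwx (by rw [trace_eq z hwF])
    · exact h.1 hwF
  · exact h.1 hxF

theorem trace_nonempty_of_isFort (hF : IsFort (sK3veeK1 s) F) (ha : inr () ∈ F) (i : Fin s) :
    (trace F i).Nonempty := by
  by_contra! h
  have hF_inl : ∀ x, inl (i, x) ∉ F := fun x hx => by simpa [h] using mem_trace.mpr hx
  obtain ⟨w, hwF, hwa, hw⟩ :=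
    (isFort_iff.mp hF).2 (inl (i, 0)) (hF_inl 0) (inr ()) ha adj_inl_inr
  rcases w with ⟨j, z⟩ | ⟨⟩
  · obtain ⟨rfl, -⟩ := adj_inl_inl.mp hw
    exact hF_inl z hwF
  · exact hwa rfl

theorem two_le_sum_card_trace_of_isFort (hs : 2 ≤ s) (hF : IsFort (sK3veeK1 s) F) :
    2 ≤ ∑ i, #(trace F i) := by
  rcases apex_mem_or_one_lt_card_trace_of_isFort hF with ha | ⟨i, hi⟩
  · calc 2 ≤ ∑ _i : Fin s, 1 := by simpa using hs
      _ ≤ ∑ i, #(trace F i) := sum_le_sum fun i _ => (trace_nonempty_of_isFort hF ha i).card_pos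
  · exact hi.trans_le (single_le_sum (f := fun i => #(trace F i)) (by simp) (mem_univ i))

theorem card_le_of_pairwise_disjoint_forts {𝒞 : Finset (Finset (Fin s × Fin 3 ⊕ Unit))}
    (hforts : ∀ F ∈ 𝒞, IsFort (sK3veeK1 s) F)
    (hdisj : (↑𝒞 : Set (Finset (Fin s × Fin 3 ⊕ Unit))).Pairwise Disjoint) :
    #𝒞 ≤ s + 1 := by
  rw [← card_filter_add_card_filter_not (inr () ∈ ·)]
  have card_apex : #{F ∈ 𝒞 | inr () ∈ F} ≤ 1 := by
    refine card_le_one.mpr fun F hF F' hF' => by_contra fun hne => ?_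
    rw [mem_filter] at hF hF'
    exact disjoint_left.mp (hdisj hF.1 hF'.1 hne) hF.2 hF'.2
  have card_no_apex : #{F ∈ 𝒞 | inr () ∉ F} ≤ #(univ : Finset (Fin s)) := by
    refine card_le_card_of_forall_subsingleton (fun F i => 1 < #(trace F i)) ?_ ?_
    · intro F hF
      rw [mem_filter] at hF
      obtain ⟨i, hi⟩ := (apex_mem_or_one_lt_card_trace_of_isFort (hforts F hF.1)).resolve_left hF.2
      exact ⟨i, mem_univ i, hi⟩
    · rintro i - F ⟨hF, hFi⟩ F' ⟨hF', hF'i⟩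
      by_contra hne
      exact not_disjoint_of_one_lt_card_trace hFi hF'i
        (hdisj (mem_filter.mp hF).1 (mem_filter.mp hF').1 hne)
  rw [card_univ, Fintype.card_fin] at card_no_apex
  omega

theorem exists_pairwise_disjoint_forts : ∃ 𝒞 : Finset (Finset (Fin s × Fin 3 ⊕ Unit)),
    (∀ F ∈ 𝒞, IsFort (sK3veeK1 s) F) ∧
      (↑𝒞 : Set (Finset (Fin s × Fin 3 ⊕ Unit))).Pairwise Disjoint ∧ #𝒞 = s + 1 := by
  set T : Finset (Fin s × Fin 3 ⊕ Unit) := insert (inr ()) (univ.image fun i => inl (i, 2))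
  set P : Fin s → Finset (Fin s × Fin 3 ⊕ Unit) := fun i => {inl (i, 0), inl (i, 1)}
  have hP : Function.Injective P := fun i j h => by
    simpa [P] using h.subset (mem_insert_self (inl (i, 0)) _)
  have hT : T ∉ univ.image P := by
    simp [T, P, Finset.ext_iff]
  refine ⟨insert T (univ.image P), ?_, ?_, ?_⟩
  · simp only [forall_mem_insert, forall_mem_image]
    exact ⟨isFort_insert_apex _, fun i _ => isFort_pair i (by decide)⟩
  · rw [coe_insert, Set.pairwise_insert, coe_image, hP.injOn.pairwise_image]
    constructor
    · intro i _ j _ hij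
      simp [P, hij.symm]
    · simp [T, P]
  · rw [card_insert_of_notMem hT, card_image_of_injective _ hP, card_univ, Fintype.card_fin]

theorem fortNumber_eq : fortNumber (sK3veeK1 s) = s + 1 :=
  IsGreatest.csSup_eq ⟨exists_pairwise_disjoint_forts,
    fun _ ⟨_, hforts, hdisj, hcard⟩ => hcard ▸ card_le_of_pairwise_disjoint_forts hforts hdisj⟩

theorem three_halves_le_sum_triangle {ω : Fin s × Fin 3 ⊕ Unit → ℝ}
    (hω : ∀ F, IsFort (sK3veeK1 s) F → 1 ≤ ∑ v ∈ F, ω v) (i : Fin s) :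
    3 / 2 ≤ ∑ x, ω (inl (i, x)) := by
  have h01 := hω _ (isFort_pair i (by decide : (0 : Fin 3) ≠ 1))
  have h02 := hω _ (isFort_pair i (by decide : (0 : Fin 3) ≠ 2))
  have h12 := hω _ (isFort_pair i (by decide : (1 : Fin 3) ≠ 2))
  rw [sum_pair (by simp)] at h01 h02 h12
  rw [Fin.sum_univ_three]
  linarith

theorem fracZ_eq (hs : 2 ≤ s) : fracZ (sK3veeK1 s) = 3 * s / 2 := by
  refine IsLeast.csInf_eq ⟨⟨Sum.elim (fun _ => 1 / 2) 0, ?_, fun F hF => ?_, ?_⟩, ?_⟩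
  · rintro (_ | _) <;> simp
  · have : (2 : ℝ) ≤ ∑ i, (#(trace F i) : ℝ) := mod_cast two_le_sum_card_trace_of_isFort hs hF
    rw [sum_eq_sum_trace]
    simp only [Sum.elim_inl, sum_const, nsmul_eq_mul, ← sum_mul, Sum.elim_inr, Pi.zero_apply,
      ite_self, add_zero]
    linarith
  · simp [Fintype.sum_sum_type, div_eq_inv_mul, mul_comm]
  · rintro _ ⟨ω, hω_nonneg, hω, rfl⟩
    have := sum_le_sum fun i (_ : i ∈ univ) => three_halves_le_sum_triangle hω i
    rw [sum_const, card_univ, Fintype.card_fin, nsmul_eq_mul] at this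
    rw [Fintype.sum_sum_type, Fintype.sum_prod_type, Fintype.sum_unique (fun u => ω (inr u))]
    linarith [hω_nonneg (inr ())]

theorem isZeroForcingSet_compl_image :
    IsZeroForcingSet (sK3veeK1 s)
      ↑(univ.image fun i => (inl (i, 2) : Fin s × Fin 3 ⊕ Unit))ᶜ := by
  rintro (⟨i, x⟩ | ⟨⟩)
  · by_cases hx : x = 2
    · subst hx
      refine .force (inl (i, 0)) _ (by simp) (.init _ (by simp)) ?_
      rintro (⟨j, z⟩ | ⟨⟩) hadj hne
      · obtain ⟨rfl, -⟩ := adj_inl_inl.mp hadj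
        exact .init _ (by simpa [eq_comm] using hne)
      · exact .init _ (by simp)
    · exact .init _ (by simpa [eq_comm] using hx)
  · exact .init _ (by simp)

theorem card_compl_image :
    #(univ.image fun i => (inl (i, 2) : Fin s × Fin 3 ⊕ Unit))ᶜ = 2 * s + 1 := by
  rw [card_compl, card_image_of_injective _ (fun i j h => by simpa using h)]
  simp only [card_univ, Fintype.card_sum, Fintype.card_prod, Fintype.card_fin, Fintype.card_unit]
  omega

theorem two_le_card_trace_of_isZeroForcingSet (hS : IsZeroForcingSet (sK3veeK1 s) ↑S) (i : Fin s) :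
    2 ≤ #(trace S i) := by
  by_contra! h
  have : 1 < #(trace S i)ᶜ := by
    rw [card_compl, Fintype.card_fin]
    omega
  obtain ⟨x, hx, y, hy, hxy⟩ := one_lt_card.mp this
  obtain ⟨v, hv, hvS⟩ := hS.exists_mem_of_isFort (isFort_pair i hxy)
  rw [mem_insert, mem_singleton] at hv
  rcases hv with rfl | rfl
  exacts [mem_compl.mp hx (mem_trace.mpr hvS), mem_compl.mp hy (mem_trace.mpr hvS)]

theorem apex_mem_or_exists_forall_mem_of_isZeroForcingSet (hS : IsZeroForcingSet (sK3veeK1 s) ↑S) :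
    inr () ∈ S ∨ ∃ i, ∀ x, inl (i, x) ∈ S := by
  by_contra! h
  choose c hc using h.2
  obtain ⟨v, hv, hvS⟩ := hS.exists_mem_of_isFort (isFort_insert_apex c)
  simp only [mem_insert, mem_image, mem_univ, true_and] at hv
  rcases hv with rfl | ⟨i, rfl⟩
  · exact h.1 hvS
  · exact hc i hvS

theorem two_mul_add_one_le_card_of_isZeroForcingSet (hS : IsZeroForcingSet (sK3veeK1 s) ↑S) :
    2 * s + 1 ≤ #S := by
  have htwo := two_le_card_trace_of_isZeroForcingSet hS
  have hsum : 2 * s ≤ ∑ i, #(trace S i) := by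
    simpa [mul_comm] using sum_le_sum fun i (_ : i ∈ univ) => htwo i
  rw [card_eq_sum_card_trace]
  rcases apex_mem_or_exists_forall_mem_of_isZeroForcingSet hS with ha | ⟨i, hi⟩
  · rw [if_pos ha]
    omega
  · have : 2 * s < ∑ i, #(trace S i) := calc
      2 * s = ∑ _i : Fin s, 2 := by simp [mul_comm]
      _ < ∑ i, #(trace S i) := by
        refine sum_lt_sum (fun j _ => htwo j) ⟨i, mem_univ i, ?_⟩
        rw [eq_univ_of_forall fun x => mem_trace.mpr (hi x)]
        simp
    omega

theorem zfNumber_eq : zfNumber (sK3veeK1 s) = 2 * s + 1 :=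
  IsLeast.csInf_eq ⟨⟨_, isZeroForcingSet_compl_image, card_compl_image⟩,
    fun _ ⟨_, hS, hcard⟩ => hcard ▸ two_mul_add_one_le_card_of_isZeroForcingSet hS⟩

end sK3veeK1

/-- for `s ≥ 2` and `G = sK₃ ∨ K₁` (of order `n = 3s+1`),
`ft(G) = s+1`, `Z*(G) = 3s/2`, and `Z(G) = 2s+1`. -/
theorem sK3veeK1_numbers (s : ℕ) (hs : 2 ≤ s) :
    fortNumber (sK3veeK1 s) = s + 1 ∧
    fracZ (sK3veeK1 s) = 3 * (s : ℝ) / 2 ∧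
    zfNumber (sK3veeK1 s) = 2 * s + 1 :=
  ⟨sK3veeK1.fortNumber_eq, sK3veeK1.fracZ_eq hs, sK3veeK1.zfNumber_eq⟩
end

section
/- Let G be a connected finite simple graph of order n ≥ 2. Then every vertex of G is contained in some fort of G of cardinality two if and only if Z*(G) = n/2. -/
open Finset

/-!
In a connected graph with at least two vertices no singleton is a fort, so the constant weight
`1/2` is feasible and `Z*(G) ≤ n/2`. A two-element set `{a, b}` is a fort iff every other vertex
sees both or neither of `a`, `b`; this twin relation is transitive. If every vertex `v` has such a
twin `p v`, a feasible `ω` satisfies `ω v + ω (p v) ≥ 1`, and the vertices of weight below `1/2`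
have pairwise distinct twins (two of them sharing a twin would be twins of each other), whose excess
over `1/2` pays for their deficit; hence `∑ ω ≥ n/2`. Conversely, if `v` lies in no two-element
fort, every fort through `v` has at least three vertices, so weight `1/2` everywhere except `0` at
`v` is feasible, of total `(n - 1)/2`.
-/

section

variable {V : Type*}

theorem existsUnique_mem_pair_and_iff [DecidableEq V] {P : V → Prop} {a b : V} (hab : a ≠ b) :
    (∃! u, u ∈ ({a, b} : Finset V) ∧ P u) ↔ ¬(P a ↔ P b) := by
  simp only [ExistsUnique, mem_insert, mem_singleton]
  grind

theorem exists_ne_eq_pair_of_mem_of_card_eq_two [DecidableEq V] {s : Finset V} {a : V}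
    (ha : a ∈ s) (hs : #s = 2) : ∃ b, a ≠ b ∧ s = {a, b} := by
  obtain ⟨x, y, hxy, rfl⟩ := card_eq_two.1 hs
  rcases mem_insert.1 ha with rfl | ha
  · exact ⟨y, hxy, rfl⟩
  · rw [mem_singleton] at ha
    subst ha
    exact ⟨x, hxy.symm, pair_comm _ _⟩

theorem isFort_pair_iff [DecidableEq V] (G : SimpleGraph V) {a b : V} (hab : a ≠ b) :
    IsFort G {a, b} ↔ ∀ x, x ≠ a → x ≠ b → (G.Adj x a ↔ G.Adj x b) := by
  simp only [IsFort, insert_nonempty, true_and, existsUnique_mem_pair_and_iff hab, not_not]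
  simp only [mem_insert, mem_singleton, not_or, and_imp]

theorem IsFort.pair_trans [DecidableEq V] {G : SimpleGraph V} {a b c : V}
    (hab : a ≠ b) (hbc : b ≠ c) (hac : a ≠ c)
    (h₁ : IsFort G {a, b}) (h₂ : IsFort G {b, c}) : IsFort G {a, c} := by
  rw [isFort_pair_iff G hab] at h₁
  rw [isFort_pair_iff G hbc] at h₂
  rw [isFort_pair_iff G hac]
  intro x hxa hxc
  obtain rfl | hxb := eq_or_ne x b
  · calc G.Adj x a ↔ G.Adj a x := G.adj_comm _ _
      _ ↔ G.Adj a c := h₂ a hab hac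
      _ ↔ G.Adj c a := G.adj_comm _ _
      _ ↔ G.Adj c x := h₁ c hac.symm hbc.symm
      _ ↔ G.Adj x c := G.adj_comm _ _
  · exact (h₁ x hxa hxb).trans (h₂ x hxb hxc)

theorem IsFort.nontrivial {G : SimpleGraph V} {F : Finset V} (hF : IsFort G F)
    (hadj : ∀ v, ∃ u, G.Adj v u) : F.Nontrivial := by
  obtain ⟨v, rfl⟩ | hF' := hF.1.exists_eq_singleton_or_nontrivial
  · obtain ⟨u, hvu⟩ := hadj v
    refine absurd ⟨v, ⟨mem_singleton_self v, hvu.symm⟩, fun w hw => mem_singleton.1 hw.1⟩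
      (hF.2 u ?_)
    simpa using hvu.ne'
  · exact hF'

theorem card_div_two_le_sum_of_pairing {ι : Type*} [Fintype ι] [DecidableEq ι]
    (ω : ι → ℝ) (p : ι → ι)
    (hp : ∀ i, 1 ≤ ω i + ω (p i)) (hshared : ∀ i j, i ≠ j → p i = p j → 1 ≤ ω i + ω j) :
    (Fintype.card ι : ℝ) / 2 ≤ ∑ i, ω i := by
  set L := univ.filter fun i => ω i < 1 / 2
  have hinj : Set.InjOn p L := fun i hi j hj hij => by
    by_contra hne
    have := hshared i j hne hij
    simp only [L, coe_filter, mem_univ, true_and, Set.mem_ofPred_eq] at hi hj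
    linarith
  have himage : L.image p ⊆ univ.filter fun i => ¬ω i < 1 / 2 := by
    intro j hj
    obtain ⟨i, hi, rfl⟩ := mem_image.1 hj
    have := hp i
    simp only [L, mem_filter, mem_univ, true_and] at hi ⊢
    linarith
  suffices 0 ≤ ∑ i, (ω i - 1 / 2) by
    rw [sum_sub_distrib, sum_const, card_univ, nsmul_eq_mul] at this
    linarith
  calc (0 : ℝ)
      ≤ ∑ i ∈ L, ((ω i - 1 / 2) + (ω (p i) - 1 / 2)) :=
        sum_nonneg fun i _ => by linarith [hp i]
    _ = ∑ i ∈ L, (ω i - 1 / 2) + ∑ j ∈ L.image p, (ω j - 1 / 2) := by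
        rw [sum_add_distrib, sum_image hinj]
    _ ≤ ∑ i ∈ L, (ω i - 1 / 2) + ∑ j ∈ univ.filter (fun i => ¬ω i < 1 / 2), (ω j - 1 / 2) := by
        refine add_le_add le_rfl (sum_le_sum_of_subset_of_nonneg himage fun j hj _ => ?_)
        simp only [mem_filter, mem_univ, true_and, not_lt] at hj
        linarith
    _ = ∑ i, (ω i - 1 / 2) := sum_filter_add_sum_filter_not _ _ _

def IsFractionalFortCover (G : SimpleGraph V) (ω : V → ℝ) : Prop :=
  (∀ v, 0 ≤ ω v) ∧ ∀ F : Finset V, IsFort G F → 1 ≤ ∑ v ∈ F, ω v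

noncomputable def halfWeightOff [DecidableEq V] (S : Finset V) : V → ℝ :=
  fun v => if v ∈ S then 0 else 1 / 2

theorem sum_halfWeightOff [DecidableEq V] (S T : Finset V) :
    ∑ v ∈ T, halfWeightOff S v = #(T \ S) / 2 := by
  simp only [halfWeightOff]
  rw [sum_ite, sum_const_zero, zero_add, sum_const, nsmul_eq_mul, filter_notMem_eq_sdiff]
  ring

theorem isFractionalFortCover_halfWeightOff [DecidableEq V] {G : SimpleGraph V} (S : Finset V)
    (hS : ∀ F, IsFort G F → 2 ≤ #(F \ S)) : IsFractionalFortCover G (halfWeightOff S) := by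
  refine ⟨fun v => by unfold halfWeightOff; positivity, fun F hF => ?_⟩
  have : (2 : ℝ) ≤ #(F \ S) := by exact_mod_cast hS F hF
  rw [sum_halfWeightOff]
  linarith

section Finite

variable [Fintype V] {G : SimpleGraph V}

theorem fracZ_le_sum {ω : V → ℝ} (hω : IsFractionalFortCover G ω) : fracZ G ≤ ∑ v, ω v :=
  csInf_le ⟨0, by rintro x ⟨ω, h0, -, rfl⟩; exact sum_nonneg fun v _ => h0 v⟩ ⟨ω, hω.1, hω.2, rfl⟩

theorem le_fracZ {c : ℝ} (h : ∀ ω, IsFractionalFortCover G ω → c ≤ ∑ v, ω v) : c ≤ fracZ G := by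
  refine le_csInf ⟨_, fun _ => 1, fun _ => zero_le_one, fun F hF => ?_, rfl⟩ ?_
  · simpa using hF.1.card_pos
  · rintro x ⟨ω, h0, hF, rfl⟩
    exact h ω ⟨h0, hF⟩

variable [DecidableEq V]

theorem card_div_two_le_sum_of_isFort_pair (hpartner : ∀ v, ∃ w, v ≠ w ∧ IsFort G {v, w})
    {ω : V → ℝ} (hω : IsFractionalFortCover G ω) : (Fintype.card V : ℝ) / 2 ≤ ∑ v, ω v := by
  choose p hp using hpartner
  refine card_div_two_le_sum_of_pairing ω p (fun v => ?_) (fun u w huw hpuw => ?_)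
  · simpa [sum_pair (hp v).1] using hω.2 _ (hp v).2
  · have hw := (hp w).2
    rw [← hpuw, pair_comm] at hw
    have huw_fort := (hp u).2.pair_trans (hp u).1 (hpuw ▸ (hp w).1.symm) huw hw
    simpa [sum_pair huw] using hω.2 _ huw_fort

theorem fracZ_le_card_div_two (hfort : ∀ F, IsFort G F → 2 ≤ #F) :
    fracZ G ≤ (Fintype.card V : ℝ) / 2 := by
  simpa [sum_halfWeightOff] using
    fracZ_le_sum (isFractionalFortCover_halfWeightOff ∅ (by simpa using hfort))

theorem fracZ_le_card_sub_one_div_two (hfort : ∀ F, IsFort G F → 2 ≤ #F) (v : V)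
    (hv : ∀ F, IsFort G F → #F = 2 → v ∉ F) :
    fracZ G ≤ ((Fintype.card V : ℝ) - 1) / 2 := by
  have hcover : IsFractionalFortCover G (halfWeightOff {v}) := by
    refine isFractionalFortCover_halfWeightOff {v} fun F hF => ?_
    rw [sdiff_singleton_eq_erase, card_erase_eq_ite]
    split_ifs with hvF
    · have hF2 : #F ≠ 2 := fun h2 => hv F hF h2 hvF
      have := hfort F hF
      omega
    · exact hfort F hF
  have := fracZ_le_sum hcover
  rwa [sum_halfWeightOff, ← compl_eq_univ_sdiff, card_compl, Nat.cast_sub (card_le_univ _),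
    card_singleton, Nat.cast_one] at this

end Finite

end

/-- for a connected graph of order `n ≥ 2`, every vertex lies in a fort of
cardinality two iff `Z*(G) = n/2`. -/
theorem fracZ_eq_half_order_iff {V : Type*} [Fintype V] (G : SimpleGraph V)
    (hconn : G.Connected) (hn : 2 ≤ Fintype.card V) :
    (∀ v : V, ∃ F : Finset V, IsFort G F ∧ F.card = 2 ∧ v ∈ F) ↔
      fracZ G = (Fintype.card V : ℝ) / 2 := by
  classical
  have : Nontrivial V := Fintype.one_lt_card_iff_nontrivial.1 hn
  have hfort : ∀ F, IsFort G F → 2 ≤ #F := fun F hF =>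
    one_lt_card_iff_nontrivial.2 (hF.nontrivial hconn.preconnected.exists_adj_of_nontrivial)
  constructor
  · intro h
    refine le_antisymm (fracZ_le_card_div_two hfort)
      (le_fracZ fun ω => card_div_two_le_sum_of_isFort_pair fun v => ?_)
    obtain ⟨F, hF, hcard, hvF⟩ := h v
    obtain ⟨w, hvw, rfl⟩ := exists_ne_eq_pair_of_mem_of_card_eq_two hvF hcard
    exact ⟨w, hvw, hF⟩
  · intro h v
    by_contra! hv
    have := fracZ_le_card_sub_one_div_two hfort v hv
    linarith
end
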